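/- Let 0 < α < 2, and let β ≥ 0 with β > α (case i). Suppose A generates an (α,β)-ROF R_{α,β} on a Banach space X such that ‖R_{α,β}(t)‖ = O(t^{β-α-ε}) as t → ∞ for some 0 < ε < β - α. Then X = {0}. -/

import Mathlib

open MeasureTheory Set

/-- The Wright function `φ(ρ, μ; z) = ∑ z^k/(k! Γ(ρk+μ))`. -/
noncomputable def wright (ρ : ℝ) (μ : ℂ) (z : ℂ) : ℂ :=
  ∑' k : ℕ, z ^ k / ((k.factorial : ℂ) * Complex.Gamma ((ρ : ℂ) * k + μ))

/-- Bessel function of the first kind of real order `ν` at a real argument. -/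
noncomputable def besselJ (ν : ℝ) (x : ℝ) : ℝ :=
  (x / 2) ^ ν * ∑' k : ℕ, (-1 : ℝ) ^ k * (x / 2) ^ (2 * k) /
    ((k.factorial : ℝ) * Real.Gamma (ν + k + 1))

/-- Mittag-Leffler function. -/
noncomputable def mittagLeffler (a m : ℝ) (z : ℂ) : ℂ :=
  ∑' k : ℕ, z ^ k / Complex.Gamma ((a : ℂ) * k + m)

variable {X : Type*} [NormedAddCommGroup X] [NormedSpace ℂ X]

/-- `R` is the (bounded, everywhere-defined) resolvent `(z - A)⁻¹` of the
(possibly unbounded) linear operator `A`; i.e. `z ∈ ρ(A)`. -/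
structure IsResolventOf (A : X →ₗ.[ℂ] X) (z : ℂ) (R : X →L[ℂ] X) : Prop where
  mem : ∀ x : X, R x ∈ A.domain
  right : ∀ x : X, z • R x - A ⟨R x, mem x⟩ = x
  left : ∀ y : A.domain, R (z • (y : X) - A y) = y

/-- The open sector of half-angle `θ` around the positive real axis. -/
def sect (θ : ℝ) : Set ℂ := {z : ℂ | z ≠ 0 ∧ |Complex.arg z| < θ}

/-- `A` is sectorial of angle `ω`: the spectrum lies in the closed sector of angle `ω`
(resolvents exist outside) and `‖z(z-A)⁻¹‖` is uniformly bounded outside each bigger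
closed sector. -/
def IsSectorial (A : X →ₗ.[ℂ] X) (ω : ℝ) : Prop :=
  (∀ z ∈ (closure (sect ω))ᶜ, ∃ R : X →L[ℂ] X, IsResolventOf A z R) ∧
  ∀ ω' ∈ Set.Ioo ω Real.pi, ∃ M : ℝ,
    ∀ z ∈ (closure (sect ω'))ᶜ, ∀ R : X →L[ℂ] X, IsResolventOf A z R → ‖z‖ * ‖R‖ ≤ M

/-- `B = A⁻¹` as an unbounded operator. -/
def IsInverseOf (B A : X →ₗ.[ℂ] X) : Prop :=
  (∀ x : A.domain, ∃ h : A x ∈ B.domain, B ⟨A x, h⟩ = (x : X)) ∧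
  (∀ y : B.domain, ∃ h : B y ∈ A.domain, A ⟨B y, h⟩ = (y : X))

/-- Riemann–Liouville fractional integral of order `μ > 0`. -/
noncomputable def fracInt (μ : ℝ) (f : ℝ → X) (t : ℝ) : X :=
  ∫ s in Set.Ioo 0 t, ((t - s) ^ (μ - 1) / Real.Gamma μ) • f s

/-- `S` is a `β`-times integrated `α`-resolvent operator function generated by `A`,
with exponential bound `M e^{ω t}`. -/
structure IsROF (A : X →ₗ.[ℂ] X) (α β : ℝ) (S : ℝ → X →L[ℂ] X) (ω M : ℝ) : Prop where
  cont : ∀ x : X, ContinuousOn (fun t : ℝ => S t x) (Set.Ici 0)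
  bound : ∀ t : ℝ, 0 ≤ t → ‖S t‖ ≤ M * Real.exp (ω * t)
  laplace : ∀ l : ℝ, ω < l → ∃ R : X →L[ℂ] X,
    IsResolventOf A ((l ^ α : ℝ) : ℂ) R ∧
    ∀ x : X, ((l ^ (α - β - 1) : ℝ) : ℂ) • R x =
      ∫ t in Set.Ioi (0 : ℝ), Real.exp (-(l * t)) • S t x

/-- `S` is a tempered `β`-times integrated `α`-resolvent operator function generated
by `A`: `‖S t‖ ≤ M t^β` and the Laplace-transform identity holds for all `λ > 0`. -/
structure IsTemperedROF (A : X →ₗ.[ℂ] X) (α β : ℝ) (S : ℝ → X →L[ℂ] X) (M : ℝ) : Prop where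
  cont : ∀ x : X, ContinuousOn (fun t : ℝ => S t x) (Set.Ici 0)
  bound : ∀ t : ℝ, 0 ≤ t → ‖S t‖ ≤ M * t ^ β
  laplace : ∀ l : ℝ, 0 < l → ∃ R : X →L[ℂ] X,
    IsResolventOf A ((l ^ α : ℝ) : ℂ) R ∧
    ∀ x : X, ((l ^ (α - β - 1) : ℝ) : ℂ) • R x =
      ∫ t in Set.Ioi (0 : ℝ), Real.exp (-(l * t)) • S t x

/-!
Under the polynomial growth bound the Laplace transform `L(λ) = ∫₀^∞ e^{-λt} S(t) dt` converges
and is holomorphic on the whole right half-plane. Analytic continuation from `λ > ω` therefore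
shows that `λ^{β+1-α} L(λ)` still inverts `λ^α - A` on `D(A)` for every `λ > 0`, i.e.
`y = λ^{β+1} L(λ) y - λ^{β+1-α} L(λ) A y` for `y ∈ D(A)`. The right-hand side is
`O(λ^{β-α} + λ^ε)` as `λ → 0⁺`, so `D(A) = 0`; as `D(A)` is the range of a resolvent, `X = 0`.
-/

open Filter Topology

namespace IsResolventOf

variable {A : X →ₗ.[ℂ] X} {z : ℂ} {R : X →L[ℂ] X}

theorem eq_zero_of_apply_eq_zero (hR : IsResolventOf A z R) {x : X} (hx : R x = 0) : x = 0 := by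
  have hy : (⟨R x, hR.mem x⟩ : A.domain) = 0 := Subtype.ext hx
  rw [← hR.right x, hy, hx, LinearPMap.map_zero, smul_zero, sub_zero]

end IsResolventOf

noncomputable def laplaceTransform (f : ℝ → X) (z : ℂ) : X :=
  ∫ t in Ioi (0 : ℝ), Complex.exp (-(z * t)) • f t

theorem laplaceTransform_ofReal (f : ℝ → X) (l : ℝ) :
    laplaceTransform f l = ∫ t in Ioi (0 : ℝ), Real.exp (-(l * t)) • f t := by
  refine setIntegral_congr_fun measurableSet_Ioi fun t _ => ?_
  rw [← Complex.coe_smul, Complex.ofReal_exp]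
  push_cast
  rfl

theorem integrableOn_rpow_mul_exp_neg_mul {p c : ℝ} (hp : -1 < p) (hc : 0 < c) :
    IntegrableOn (fun t : ℝ => t ^ p * Real.exp (-(c * t))) (Ioi 0) := by
  simpa [Real.rpow_one] using integrableOn_rpow_mul_exp_neg_mul_rpow hp one_pos hc

theorem integrableOn_one_add_rpow_mul_exp_neg_mul {γ c : ℝ} (hγ : -1 < γ) (hc : 0 < c) :
    IntegrableOn (fun t : ℝ => (1 + t ^ γ) * Real.exp (-(c * t))) (Ioi 0) := by
  have hexp : IntegrableOn (fun t : ℝ => Real.exp (-(c * t))) (Ioi 0) := by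
    simpa using exp_neg_integrableOn_Ioi 0 hc
  simp only [add_mul, one_mul]
  exact hexp.add (integrableOn_rpow_mul_exp_neg_mul hγ hc)

theorem integral_one_add_rpow_mul_exp_neg_mul {γ c : ℝ} (hγ : -1 < γ) (hc : 0 < c) :
    ∫ t in Ioi (0 : ℝ), (1 + t ^ γ) * Real.exp (-(c * t)) =
      c ^ (-1 : ℝ) + Real.Gamma (γ + 1) * c ^ (-(γ + 1)) := by
  have hGamma (a : ℝ) (ha : 0 < a) :
      ∫ t in Ioi (0 : ℝ), t ^ (a - 1) * Real.exp (-(c * t)) = Real.Gamma a * c ^ (-a) := by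
    rw [Real.integral_rpow_mul_exp_neg_mul_Ioi ha hc, one_div, Real.inv_rpow hc.le,
      Real.rpow_neg hc.le, mul_comm]
  have h₀ := hGamma 1 one_pos
  have h₁ := hGamma (γ + 1) (by linarith)
  simp only [sub_self, Real.rpow_zero, one_mul, Real.Gamma_one, add_sub_cancel_right] at h₀ h₁
  simp only [add_mul, one_mul]
  have hexp : IntegrableOn (fun t : ℝ => Real.exp (-(c * t))) (Ioi 0) := by
    simpa using exp_neg_integrableOn_Ioi 0 hc
  rw [integral_add hexp (integrableOn_rpow_mul_exp_neg_mul hγ hc), h₀, h₁]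

section Laplace

variable {f : ℝ → X} {C γ : ℝ}

theorem norm_cexp_neg_mul_smul_le (hf : ∀ t, 0 < t → ‖f t‖ ≤ C * (1 + t ^ γ)) {z : ℂ} {c t : ℝ}
    (hcz : c ≤ z.re) (ht : 0 < t) :
    ‖Complex.exp (-(z * t)) • f t‖ ≤ C * ((1 + t ^ γ) * Real.exp (-(c * t))) := by
  have hexp : Real.exp (-(z.re * t)) ≤ Real.exp (-(c * t)) := by gcongr
  calc ‖Complex.exp (-(z * t)) • f t‖ = Real.exp (-(z.re * t)) * ‖f t‖ := by
        rw [norm_smul, Complex.norm_exp]; simp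
    _ ≤ Real.exp (-(c * t)) * (C * (1 + t ^ γ)) :=
        mul_le_mul hexp (hf t ht) (norm_nonneg _) (Real.exp_pos _).le
    _ = C * ((1 + t ^ γ) * Real.exp (-(c * t))) := by ring

theorem norm_laplaceTransform_le (hf : ∀ t, 0 < t → ‖f t‖ ≤ C * (1 + t ^ γ)) (hγ : -1 < γ)
    {l : ℝ} (hl : 0 < l) :
    ‖laplaceTransform f l‖ ≤ C * (l ^ (-1 : ℝ) + Real.Gamma (γ + 1) * l ^ (-(γ + 1))) := by
  rw [← integral_one_add_rpow_mul_exp_neg_mul hγ hl, ← integral_const_mul]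
  refine norm_integral_le_of_norm_le
    ((integrableOn_one_add_rpow_mul_exp_neg_mul hγ hl).const_mul C) ?_
  filter_upwards [self_mem_ae_restrict measurableSet_Ioi] with t ht
  exact norm_cexp_neg_mul_smul_le hf (by simp) ht

theorem tendsto_rpow_mul_norm_laplaceTransform (hf : ∀ t, 0 < t → ‖f t‖ ≤ C * (1 + t ^ γ))
    (hγ : -1 < γ) {p : ℝ} (hp : 1 < p) (hpγ : γ + 1 < p) :
    Tendsto (fun l : ℝ => l ^ p * ‖laplaceTransform f l‖) (𝓝[>] 0) (𝓝 0) := by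
  have hpow : ∀ q : ℝ, 0 < q → Tendsto (fun l : ℝ => l ^ q) (𝓝[>] 0) (𝓝 0) := fun q hq =>
    ((Real.continuous_rpow_const hq.le).tendsto' 0 0 (Real.zero_rpow hq.ne')).mono_left
      nhdsWithin_le_nhds
  have hbound : Tendsto (fun l : ℝ => C * (l ^ (p - 1) + Real.Gamma (γ + 1) * l ^ (p - (γ + 1))))
      (𝓝[>] 0) (𝓝 0) := by
    simpa using ((hpow _ (by linarith)).add ((hpow _ (by linarith)).const_mul
      (Real.Gamma (γ + 1)))).const_mul C
  refine squeeze_zero' ?_ ?_ hbound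
  · filter_upwards [self_mem_nhdsWithin] with l (hl : 0 < l)
    positivity
  filter_upwards [self_mem_nhdsWithin] with l (hl : 0 < l)
  calc l ^ p * ‖laplaceTransform f l‖
      ≤ l ^ p * (C * (l ^ (-1 : ℝ) + Real.Gamma (γ + 1) * l ^ (-(γ + 1)))) := by
        gcongr; exact norm_laplaceTransform_le hf hγ hl
    _ = C * (l ^ (p - 1) + Real.Gamma (γ + 1) * l ^ (p - (γ + 1))) := by
        rw [sub_eq_add_neg, sub_eq_add_neg, Real.rpow_add hl, Real.rpow_add hl]; ring

theorem differentiableOn_laplaceTransform [CompleteSpace X]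
    (hfm : AEStronglyMeasurable f (volume.restrict (Ioi 0)))
    (hf : ∀ t, 0 < t → ‖f t‖ ≤ C * (1 + t ^ γ)) (hγ : -1 < γ) :
    DifferentiableOn ℂ (laplaceTransform f) {z | 0 < z.re} := by
  intro z₀ (hz₀ : 0 < z₀.re)
  have hε : 0 < z₀.re / 2 := by positivity
  have hball : ∀ z ∈ Metric.ball z₀ (z₀.re / 2), z₀.re / 2 ≤ z.re := fun z hz => by
    have := (Complex.abs_re_le_norm (z - z₀)).trans (mem_ball_iff_norm.1 hz).le
    rw [Complex.sub_re, abs_le] at this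
    linarith
  have hcexp : ∀ z : ℂ, Continuous fun t : ℝ => Complex.exp (-(z * t)) := fun z => by fun_prop
  refine (hasDerivAt_integral_of_dominated_loc_of_deriv_le
    (F := fun z t => Complex.exp (-(z * t)) • f t)
    (F' := fun z t => (-(t : ℂ) * Complex.exp (-(z * t))) • f t)
    (bound := fun t => C * (t ^ (1 : ℝ) * Real.exp (-(z₀.re / 2 * t)) +
      t ^ (γ + 1) * Real.exp (-(z₀.re / 2 * t))))
    (Metric.ball_mem_nhds z₀ hε)
    (Eventually.of_forall fun z => (hcexp z).aestronglyMeasurable.smul hfm)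
    ?_ (((Complex.continuous_ofReal.neg.mul (hcexp z₀)).aestronglyMeasurable.smul hfm))
    ?_ ?_ ?_).2.differentiableAt.differentiableWithinAt
  · exact ((integrableOn_one_add_rpow_mul_exp_neg_mul hγ hz₀).const_mul C).mono'
      ((hcexp z₀).aestronglyMeasurable.smul hfm)
      (by filter_upwards [self_mem_ae_restrict measurableSet_Ioi] with t ht
          exact norm_cexp_neg_mul_smul_le hf le_rfl ht)
  · filter_upwards [self_mem_ae_restrict measurableSet_Ioi] with t (ht : 0 < t) z hz
    calc ‖(-(t : ℂ) * Complex.exp (-(z * t))) • f t‖ = t * ‖Complex.exp (-(z * t)) • f t‖ := by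
          rw [mul_smul, norm_smul, norm_neg, Complex.norm_real, Real.norm_of_nonneg ht.le]
      _ ≤ t * (C * ((1 + t ^ γ) * Real.exp (-(z₀.re / 2 * t)))) := by
          gcongr; exact norm_cexp_neg_mul_smul_le hf (hball z hz) ht
      _ = _ := by rw [Real.rpow_add ht, Real.rpow_one]; ring
  · exact ((integrableOn_rpow_mul_exp_neg_mul (by norm_num) hε).add
      (integrableOn_rpow_mul_exp_neg_mul (by linarith) hε)).const_mul C
  · refine Eventually.of_forall fun t z _ => ?_
    have hlin : HasDerivAt (fun w : ℂ => -(w * t)) (-(t : ℂ)) z := by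
      simpa using ((hasDerivAt_id z).mul_const (t : ℂ)).fun_neg
    simpa only [mul_comm (Complex.exp _)] using hlin.cexp.smul_const (f t)

end Laplace

theorem eqOn_re_pos_of_eventually_eq_atTop {E : Type*} [NormedAddCommGroup E] [NormedSpace ℂ E]
    {f g : ℂ → E} (hf : AnalyticOnNhd ℂ f {z | 0 < z.re}) (hg : AnalyticOnNhd ℂ g {z | 0 < z.re})
    (hfg : ∀ᶠ l : ℝ in atTop, f l = g l) : EqOn f g {z | 0 < z.re} := by
  obtain ⟨l₀, hl₀⟩ := eventually_atTop.1 hfg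
  set l₁ := max l₀ 1
  have hl₁ : 0 < l₁ := one_pos.trans_le (le_max_right _ _)
  have hT : Tendsto ((↑) : ℝ → ℂ) (𝓝[>] l₁) (𝓝[≠] (l₁ : ℂ)) :=
    tendsto_nhdsWithin_iff.2
      ⟨(Complex.continuous_ofReal.tendsto l₁).mono_left nhdsWithin_le_nhds,
        eventually_nhdsWithin_of_forall fun l (hl : l₁ < l) => by simpa using hl.ne'⟩
  refine hf.eqOn_of_preconnected_of_frequently_eq hg (convex_halfSpace_re_gt 0).isPreconnected
    (show 0 < (l₁ : ℂ).re by simpa using hl₁) (hT.frequently ?_)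
  have hev : ∀ᶠ l : ℝ in 𝓝[>] l₁, f l = g l :=
    eventually_nhdsWithin_of_forall fun l (hl : l₁ < l) => hl₀ l ((le_max_left _ _).trans hl.le)
  exact hev.frequently

theorem norm_apply_le_mul_one_add_rpow {S : ℝ → X →L[ℂ] X} {C γ : ℝ}
    (hbd : ∀ t, 0 < t → ‖S t‖ ≤ C * (1 + t ^ γ)) (u : X) {t : ℝ} (ht : 0 < t) :
    ‖S t u‖ ≤ C * ‖u‖ * (1 + t ^ γ) :=
  calc ‖S t u‖ ≤ ‖S t‖ * ‖u‖ := (S t).le_opNorm u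
    _ ≤ C * (1 + t ^ γ) * ‖u‖ := by gcongr; exact hbd t ht
    _ = C * ‖u‖ * (1 + t ^ γ) := by ring

namespace IsROF

variable {A : X →ₗ.[ℂ] X} {α β ω M C γ : ℝ} {S : ℝ → X →L[ℂ] X}

/-- Bochner integrals in an incomplete space are `0` by convention, so the Laplace identity
forces the resolvent to vanish. -/
theorem eq_zero_of_not_completeSpace (hS : IsROF A α β S ω M) (hX : ¬CompleteSpace X) (x : X) :
    x = 0 := by
  obtain ⟨R, hR, hlap⟩ := hS.laplace (|ω| + 1) (by linarith [le_abs_self ω])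
  refine hR.eq_zero_of_apply_eq_zero ?_
  have h := hlap x
  rw [integral_of_not_completeSpace hX, smul_eq_zero] at h
  exact h.resolve_left (by exact_mod_cast (Real.rpow_pos_of_pos (by positivity) _).ne')

theorem cpow_smul_laplaceTransform_sub_eq (hS : IsROF A α β S ω M) (y : A.domain) {l : ℝ}
    (hωl : ω < l) (hl : 0 < l) :
    (l : ℂ) ^ ((β + 1 : ℝ) : ℂ) • laplaceTransform (fun t => S t y) l -
      (l : ℂ) ^ ((β + 1 - α : ℝ) : ℂ) • laplaceTransform (fun t => S t (A y)) l = y := by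
  obtain ⟨R, hR, hlap⟩ := hS.laplace l hωl
  rw [laplaceTransform_ofReal, laplaceTransform_ofReal, ← hlap, ← hlap, smul_smul, smul_smul,
    ← Complex.ofReal_cpow hl.le, ← Complex.ofReal_cpow hl.le, ← Complex.ofReal_mul,
    ← Complex.ofReal_mul, ← Real.rpow_add hl, ← Real.rpow_add hl,
    show β + 1 + (α - β - 1) = α by ring, show β + 1 - α + (α - β - 1) = 0 by ring,
    Real.rpow_zero, Complex.ofReal_one, one_smul, ← map_smul, ← map_sub, hR.left y]

theorem cpow_smul_laplaceTransform_sub_eq_of_pos [CompleteSpace X] (hS : IsROF A α β S ω M)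
    (hbd : ∀ t, 0 < t → ‖S t‖ ≤ C * (1 + t ^ γ)) (hγ : -1 < γ) (y : A.domain) {l : ℝ}
    (hl : 0 < l) :
    (l : ℂ) ^ ((β + 1 : ℝ) : ℂ) • laplaceTransform (fun t => S t y) l -
      (l : ℂ) ^ ((β + 1 - α : ℝ) : ℂ) • laplaceTransform (fun t => S t (A y)) l = y := by
  have hopen : IsOpen {z : ℂ | 0 < z.re} := isOpen_lt continuous_const Complex.continuous_re
  have hslit : ∀ z ∈ {z : ℂ | 0 < z.re}, id z ∈ Complex.slitPlane := fun z hz =>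
    Complex.mem_slitPlane_iff.2 (Or.inl hz)
  have hL : ∀ u : X, DifferentiableOn ℂ (laplaceTransform fun t => S t u) {z | 0 < z.re} :=
    fun u => differentiableOn_laplaceTransform
      (((hS.cont u).mono Ioi_subset_Ici_self).aestronglyMeasurable measurableSet_Ioi)
      (fun t ht => norm_apply_le_mul_one_add_rpow hbd u ht) hγ
  have hF : DifferentiableOn ℂ (fun z : ℂ => z ^ ((β + 1 : ℝ) : ℂ) •
      laplaceTransform (fun t => S t y) z -
        z ^ ((β + 1 - α : ℝ) : ℂ) • laplaceTransform (fun t => S t (A y)) z) {z | 0 < z.re} :=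
    ((differentiableOn_id.cpow_const hslit).smul (hL y)).sub
      ((differentiableOn_id.cpow_const hslit).smul (hL (A y)))
  refine eqOn_re_pos_of_eventually_eq_atTop (hF.analyticOnNhd hopen) analyticOnNhd_const
    ?_ (show 0 < (l : ℂ).re by simpa using hl)
  filter_upwards [eventually_gt_atTop (max ω 0)] with l hl
  exact hS.cpow_smul_laplaceTransform_sub_eq y (lt_of_le_of_lt (le_max_left _ _) hl)
    (lt_of_le_of_lt (le_max_right _ _) hl)

theorem domain_eq_zero [CompleteSpace X] (hS : IsROF A α β S ω M)
    (hbd : ∀ t, 0 < t → ‖S t‖ ≤ C * (1 + t ^ γ)) (hγ : -1 < γ) (hα : 0 < α) (hαβ : α < β)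
    (hγβ : γ < β - α) (y : A.domain) : (y : X) = 0 := by
  have hest : ∀ᶠ l : ℝ in 𝓝[>] 0, ‖(y : X)‖ ≤
      l ^ (β + 1) * ‖laplaceTransform (fun t => S t y) l‖ +
        l ^ (β + 1 - α) * ‖laplaceTransform (fun t => S t (A y)) l‖ := by
    filter_upwards [self_mem_nhdsWithin] with l (hl : 0 < l)
    conv_lhs => rw [← hS.cpow_smul_laplaceTransform_sub_eq_of_pos hbd hγ y hl]
    refine (norm_sub_le _ _).trans_eq ?_
    rw [norm_smul, norm_smul, Complex.norm_cpow_eq_rpow_re_of_pos hl,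
      Complex.norm_cpow_eq_rpow_re_of_pos hl, Complex.ofReal_re, Complex.ofReal_re]
  have hlim := (tendsto_rpow_mul_norm_laplaceTransform
    (fun t ht => norm_apply_le_mul_one_add_rpow hbd y ht) hγ (p := β + 1) (by linarith)
      (by linarith)).add
    (tendsto_rpow_mul_norm_laplaceTransform
      (fun t ht => norm_apply_le_mul_one_add_rpow hbd (A y) ht) hγ (p := β + 1 - α)
      (by linarith) (by linarith))
  rw [add_zero] at hlim
  exact norm_le_zero_iff.1 (ge_of_tendsto hlim hest)

end IsROF

theorem stmt10_general {X : Type*} [NormedAddCommGroup X] [NormedSpace ℂ X]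
    (A : X →ₗ.[ℂ] X) (alpha beta eps : ℝ) (halpha0 : 0 < alpha)
    (heps0 : 0 < eps) (heps : eps < beta - alpha)
    (S : ℝ → X →L[ℂ] X) (omega M : ℝ) (hS : IsROF A alpha beta S omega M)
    (M2 : ℝ) (hbd : ∀ t : ℝ, 0 ≤ t → ‖S t‖ ≤ M2 * (1 + t ^ (beta - alpha - eps))) :
    ∀ x : X, x = 0 := by
  intro x
  by_cases hX : CompleteSpace X
  · obtain ⟨R, hR, -⟩ := hS.laplace (|omega| + 1) (by linarith [le_abs_self omega])
    exact hR.eq_zero_of_apply_eq_zero <| hS.domain_eq_zero (fun t ht => hbd t ht.le)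
      (by linarith) halpha0 (by linarith) (by linarith) ⟨R x, hR.mem x⟩
  · exact hS.eq_zero_of_not_completeSpace hX x

theorem stmt10 {X : Type*} [NormedAddCommGroup X] [NormedSpace ℂ X]
    (A : X →ₗ.[ℂ] X) (alpha beta eps : ℝ) (halpha0 : 0 < alpha) (halpha2 : alpha < 2)
    (hbeta : alpha < beta) (heps0 : 0 < eps) (heps : eps < beta - alpha)
    (S : ℝ → X →L[ℂ] X) (omega M : ℝ) (hS : IsROF A alpha beta S omega M)
    (M2 : ℝ) (hbd : ∀ t : ℝ, 0 ≤ t → ‖S t‖ ≤ M2 * (1 + t ^ (beta - alpha - eps))) :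
    ∀ x : X, x = 0 :=
  stmt10_general A alpha beta eps halpha0 heps0 heps S omega M hS M2 hbd
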